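/- arXiv:2309.09977 — 2 statements merged into one kernel-verified Lean document; each statement's English description precedes it below -/
import Mathlib

section
/- Suppose ψ : ℝ^d → ℝ is differentiable and L-smooth with L > 0, and let (v^{s,q}) be the Markov chain coordinate descent iterates generated from an initial point v^{0,0} with step size η > 0, block sequence k^0,…,k^{S−1}, and Q inner updates per block. Then for every s ∈ {0,…,S−1} and q ∈ {0,…,Q−1}, ‖∇_{k^s} ψ(v^{s,q}) − ∇_{k^s} ψ(v^{0,0})‖ ≤ η·L·S·Q·‖∇ψ(v^{0,0})‖·(1 + ηL)^{Qs+q}. -/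
/-! Each coordinate step moves the iterate by at most `η ‖∇ψ(v)‖ ≤ η (L D + ‖∇ψ(v⁰⁰)‖)`, where
`D` is its distance to `v⁰⁰`. Hence `L D` obeys a discrete Grönwall recursion and stays below
`‖∇ψ(v⁰⁰)‖ ((1 + ηL)ⁿ - 1)` after `n = Qs + q` steps. Smoothness turns this into the bound on
the block gradients, and `(1 + x)ⁿ - 1 ≤ n x (1 + x)ⁿ` with `n ≤ SQ` gives the stated form. -/

/-- For a block `k` (blocks given by the assignment `blk : Fin d → K` of coordinates
to blocks), the vector `∇̄_k ψ(v)` agreeing with the gradient of `ψ` at `v` on the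
coordinates of block `k` and zero elsewhere.  Note `‖maskedGrad blk ψ v k‖ = ‖∇_k ψ(v)‖`. -/
noncomputable def maskedGrad {d : ℕ} {K : Type*} [DecidableEq K]
    (blk : Fin d → K) (ψ : EuclideanSpace ℝ (Fin d) → ℝ)
    (v : EuclideanSpace ℝ (Fin d)) (k : K) : EuclideanSpace ℝ (Fin d) :=
  WithLp.toLp 2 (fun i => if blk i = k then gradient ψ v i else 0)

theorem EuclideanSpace.norm_le_norm_of_forall_abs_le {ι : Type*} [Fintype ι]
    {x y : EuclideanSpace ℝ ι} (h : ∀ i, |x i| ≤ |y i|) : ‖x‖ ≤ ‖y‖ := by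
  rw [EuclideanSpace.norm_eq, EuclideanSpace.norm_eq]
  gcongr with i
  simpa only [Real.norm_eq_abs] using h i

section MaskedGrad

variable {d : ℕ} {K : Type*} [DecidableEq K] (blk : Fin d → K)
  (ψ : EuclideanSpace ℝ (Fin d) → ℝ)

theorem norm_maskedGrad_sub_le (x y : EuclideanSpace ℝ (Fin d)) (k : K) :
    ‖maskedGrad blk ψ x k - maskedGrad blk ψ y k‖ ≤ ‖gradient ψ x - gradient ψ y‖ :=
  EuclideanSpace.norm_le_norm_of_forall_abs_le fun i => by
    by_cases h : blk i = k <;> simp [maskedGrad, h]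

theorem norm_maskedGrad_le (x : EuclideanSpace ℝ (Fin d)) (k : K) :
    ‖maskedGrad blk ψ x k‖ ≤ ‖gradient ψ x‖ :=
  EuclideanSpace.norm_le_norm_of_forall_abs_le fun i => by
    by_cases h : blk i = k <;> simp [maskedGrad, h]

theorem norm_sub_smul_maskedGrad_sub_le {L η : ℝ} (hη : 0 ≤ η)
    (hsmooth : ∀ x y : EuclideanSpace ℝ (Fin d),
      ‖gradient ψ x - gradient ψ y‖ ≤ L * ‖x - y‖)
    (x x₀ : EuclideanSpace ℝ (Fin d)) (k : K) :
    ‖x - η • maskedGrad blk ψ x k - x₀‖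
      ≤ (1 + η * L) * ‖x - x₀‖ + η * ‖gradient ψ x₀‖ := by
  have hgrad : ‖maskedGrad blk ψ x k‖ ≤ L * ‖x - x₀‖ + ‖gradient ψ x₀‖ :=
    calc ‖maskedGrad blk ψ x k‖ ≤ ‖gradient ψ x‖ := norm_maskedGrad_le blk ψ x k
      _ ≤ ‖gradient ψ x₀‖ + ‖gradient ψ x - gradient ψ x₀‖ := norm_le_norm_add_norm_sub' _ _
      _ ≤ L * ‖x - x₀‖ + ‖gradient ψ x₀‖ := by linarith [hsmooth x x₀]
  calc ‖x - η • maskedGrad blk ψ x k - x₀‖ = ‖(x - x₀) - η • maskedGrad blk ψ x k‖ := by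
        congr 1; abel
    _ ≤ ‖x - x₀‖ + η * ‖maskedGrad blk ψ x k‖ := by
        grw [norm_sub_le, norm_smul, Real.norm_of_nonneg hη]
    _ ≤ ‖x - x₀‖ + η * (L * ‖x - x₀‖ + ‖gradient ψ x₀‖) := by gcongr
    _ = (1 + η * L) * ‖x - x₀‖ + η * ‖gradient ψ x₀‖ := by ring

end MaskedGrad

theorem mul_le_mul_pow_succ_sub_one {L η D D' G : ℝ} {n : ℕ} (hL : 0 ≤ L) (hη : 0 ≤ η)
    (hstep : D' ≤ (1 + η * L) * D + η * G) (hD : L * D ≤ G * ((1 + η * L) ^ n - 1)) :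
    L * D' ≤ G * ((1 + η * L) ^ (n + 1) - 1) :=
  calc L * D' ≤ (1 + η * L) * (L * D) + η * L * G := by nlinarith
    _ ≤ (1 + η * L) * (G * ((1 + η * L) ^ n - 1)) + η * L * G := by gcongr
    _ = G * ((1 + η * L) ^ (n + 1) - 1) := by ring

theorem pow_sub_one_le_mul_pow {x : ℝ} (hx : 0 ≤ x) (n : ℕ) :
    (1 + x) ^ n - 1 ≤ n * x * (1 + x) ^ n := by
  have hsum : ∑ i ∈ Finset.range n, (1 + x) ^ i ≤ n * (1 + x) ^ n := by
    simpa using Finset.sum_le_card_nsmul (Finset.range n) (fun i => (1 + x) ^ i) _ (fun i hi =>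
      pow_le_pow_right₀ (by linarith) (Finset.mem_range.mp hi).le)
  calc (1 + x) ^ n - 1 = (∑ i ∈ Finset.range n, (1 + x) ^ i) * x := by
        rw [← geom_sum_mul]; ring
    _ ≤ n * x * (1 + x) ^ n := by nlinarith

theorem mul_norm_iterate_sub_le {d : ℕ} {K : Type*} [DecidableEq K] (blk : Fin d → K)
    (ψ : EuclideanSpace ℝ (Fin d) → ℝ) {L η : ℝ} (hL : 0 ≤ L) (hη : 0 ≤ η)
    (hsmooth : ∀ x y : EuclideanSpace ℝ (Fin d),
      ‖gradient ψ x - gradient ψ y‖ ≤ L * ‖x - y‖)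
    {S Q : ℕ} (kseq : ℕ → K) (v : ℕ → ℕ → EuclideanSpace ℝ (Fin d))
    (hrecq : ∀ s < S, ∀ q < Q,
      v s (q + 1) = v s q - η • maskedGrad blk ψ (v s q) (kseq s))
    (hrecs : ∀ s < S, v (s + 1) 0 = v s Q) :
    ∀ s < S, ∀ q ≤ Q,
      L * ‖v s q - v 0 0‖ ≤ ‖gradient ψ (v 0 0)‖ * ((1 + η * L) ^ (Q * s + q) - 1) := by
  have hblock : ∀ s < S,
      L * ‖v s 0 - v 0 0‖ ≤ ‖gradient ψ (v 0 0)‖ * ((1 + η * L) ^ (Q * s) - 1) →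
      ∀ q ≤ Q,
        L * ‖v s q - v 0 0‖ ≤ ‖gradient ψ (v 0 0)‖ * ((1 + η * L) ^ (Q * s + q) - 1) := by
    intro s hs h₀ q hq
    induction q with
    | zero => exact h₀
    | succ q ih =>
      rw [hrecq s hs q hq]
      exact mul_le_mul_pow_succ_sub_one hL hη
        (norm_sub_smul_maskedGrad_sub_le blk ψ hη hsmooth _ _ _) (ih (by omega))
  have hstart : ∀ s < S,
      L * ‖v s 0 - v 0 0‖ ≤ ‖gradient ψ (v 0 0)‖ * ((1 + η * L) ^ (Q * s) - 1) := by
    intro s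
    induction s with
    | zero => intro; simp
    | succ s ih =>
      intro hs
      rw [hrecs s (by omega), mul_add_one]
      exact hblock s (by omega) (ih (by omega)) Q le_rfl
  exact fun s hs => hblock s hs (hstart s hs)

theorem mccd_surrogate_offset_bound_general
    {d : ℕ} {K : Type*} [DecidableEq K]
    (blk : Fin d → K)
    (ψ : EuclideanSpace ℝ (Fin d) → ℝ) (L : ℝ) (hL : 0 < L)
    (hsmooth : ∀ x y : EuclideanSpace ℝ (Fin d),
      ‖gradient ψ x - gradient ψ y‖ ≤ L * ‖x - y‖)
    (S Q : ℕ)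
    (η : ℝ) (hη : 0 < η)
    (kseq : ℕ → K)
    (v : ℕ → ℕ → EuclideanSpace ℝ (Fin d))
    (hrecq : ∀ s < S, ∀ q < Q,
      v s (q + 1) = v s q - η • maskedGrad blk ψ (v s q) (kseq s))
    (hrecs : ∀ s < S, v (s + 1) 0 = v s Q) :
    ∀ s < S, ∀ q < Q,
      ‖maskedGrad blk ψ (v s q) (kseq s) - maskedGrad blk ψ (v 0 0) (kseq s)‖
        ≤ η * L * S * Q * ‖gradient ψ (v 0 0)‖ * (1 + η * L) ^ (Q * s + q) := by
  intro s hs q hq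
  have hn : ((Q * s + q : ℕ) : ℝ) ≤ S * Q := by
    have : Q * s + q ≤ Q * S :=
      calc Q * s + q ≤ Q * (s + 1) := by rw [mul_add_one]; omega
        _ ≤ Q * S := Nat.mul_le_mul_left Q hs
    exact_mod_cast this.trans_eq (mul_comm Q S)
  set G := ‖gradient ψ (v 0 0)‖
  set n := Q * s + q
  calc ‖maskedGrad blk ψ (v s q) (kseq s) - maskedGrad blk ψ (v 0 0) (kseq s)‖
      ≤ ‖gradient ψ (v s q) - gradient ψ (v 0 0)‖ := norm_maskedGrad_sub_le blk ψ _ _ _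
    _ ≤ L * ‖v s q - v 0 0‖ := hsmooth _ _
    _ ≤ G * ((1 + η * L) ^ n - 1) :=
        mul_norm_iterate_sub_le blk ψ hL.le hη.le hsmooth kseq v hrecq hrecs s hs q hq.le
    _ ≤ G * (n * (η * L) * (1 + η * L) ^ n) := by
        gcongr; exact pow_sub_one_le_mul_pow (by positivity) n
    _ = n * (η * L * G * (1 + η * L) ^ n) := by ring
    _ ≤ (S * Q) * (η * L * G * (1 + η * L) ^ n) := by gcongr
    _ = η * L * S * Q * G * (1 + η * L) ^ n := by ring

/-- **Surrogate offset bound (general step size).** For Markov chain coordinate descent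
iterates `v^{s,q}` of an `L`-smooth differentiable `ψ`, for all `s < S` and `q < Q`,
`‖∇_{k^s} ψ(v^{s,q}) − ∇_{k^s} ψ(v^{0,0})‖ ≤ η L S Q ‖∇ψ(v^{0,0})‖ (1+ηL)^{Qs+q}`. -/
theorem mccd_surrogate_offset_bound
    {d : ℕ} (hd : 1 ≤ d) {K : Type*} [Fintype K] [DecidableEq K]
    (blk : Fin d → K)
    (ψ : EuclideanSpace ℝ (Fin d) → ℝ) (L : ℝ) (hL : 0 < L)
    (hdiff : Differentiable ℝ ψ)
    (hsmooth : ∀ x y : EuclideanSpace ℝ (Fin d),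
      ‖gradient ψ x - gradient ψ y‖ ≤ L * ‖x - y‖)
    (S Q : ℕ) (hS : 1 ≤ S) (hQ : 1 ≤ Q)
    (η : ℝ) (hη : 0 < η)
    (kseq : ℕ → K)
    (v : ℕ → ℕ → EuclideanSpace ℝ (Fin d))
    (hrecq : ∀ s < S, ∀ q < Q,
      v s (q + 1) = v s q - η • maskedGrad blk ψ (v s q) (kseq s))
    (hrecs : ∀ s < S, v (s + 1) 0 = v s Q) :
    ∀ s < S, ∀ q < Q,
      ‖maskedGrad blk ψ (v s q) (kseq s) - maskedGrad blk ψ (v 0 0) (kseq s)‖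
        ≤ η * L * S * Q * ‖gradient ψ (v 0 0)‖ * (1 + η * L) ^ (Q * s + q) :=
  mccd_surrogate_offset_bound_general blk ψ L hL hsmooth S Q η hη kseq v hrecq hrecs
end

section
/- Suppose ψ : ℝ^d → ℝ is differentiable and L-smooth with L > 0, and let (v^{s,q}) be the Markov chain coordinate descent iterates generated from an initial point v^{0,0} with step size η ∈ (0, 1/(LSQ)], block sequence k^0,…,k^{S−1}, and Q inner updates per block, with final iterate v^{S,0}. Then ⟨∇ψ(v^{0,0}), v^{S,0} − v^{0,0}⟩ ≤ −η·∑_{s=0}^{S−1} ∑_{q=0}^{Q−1} ‖∇_{k^s} ψ(v^{0,0})‖² + η·S·Q·C₁·‖∇ψ(v^{0,0})‖², where C₁ := η·e·L·S·Q. -/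
/-!
Write `g₀ = ∇ψ(v⁰⁰)`. Each inner step moves the iterate by `-η ∇̄_k ψ(v^{s,q})`, and masking
commutes with the inner product against `g₀`, so the step contributes
`-η ‖∇_k ψ(v⁰⁰)‖² + η ‖g₀‖ ‖∇ψ(v^{s,q}) - g₀‖`. By smoothness the error is at most
`η ‖g₀‖ L ‖v^{s,q} - v⁰⁰‖`. Along the `SQ` inner steps the distance to `v⁰⁰` obeys the discrete
Gronwall recursion `a_{n+1} ≤ (1 + ηL) a_n + η ‖g₀‖`, hence `a_n ≤ n η ‖g₀‖ (1 + ηL)^n`, and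
`(1 + ηL)^{SQ} ≤ e` because `ηLSQ ≤ 1`. This gives `L ‖v^{s,q} - v⁰⁰‖ ≤ C₁ ‖g₀‖`, and the
theorem follows by telescoping `v^{S,0} - v⁰⁰` over all inner steps.
-/

open Real Finset

theorem le_nat_mul_mul_one_add_pow {a : ℕ → ℝ} {b c : ℝ} {N : ℕ} (hb : 0 ≤ b) (hc : 0 ≤ c)
    (h0 : a 0 ≤ 0) (h : ∀ n < N, a (n + 1) ≤ (1 + c) * a n + b) :
    ∀ n ≤ N, a n ≤ n * b * (1 + c) ^ n := by
  intro n
  induction n with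
  | zero => intro _; simpa using h0
  | succ n ih =>
    intro hn
    have hb_le : b ≤ b * (1 + c) ^ (n + 1) := le_mul_of_one_le_right hb (one_le_pow₀ (by linarith))
    have hsplit : ((n + 1 : ℕ) : ℝ) * b * (1 + c) ^ (n + 1)
        = (1 + c) * (n * b * (1 + c) ^ n) + b * (1 + c) ^ (n + 1) := by push_cast; ring
    calc a (n + 1) ≤ (1 + c) * a n + b := h n hn
      _ ≤ (1 + c) * (n * b * (1 + c) ^ n) + b := by grw [ih (by omega)]
      _ ≤ (n + 1 : ℕ) * b * (1 + c) ^ (n + 1) := by linarith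

theorem one_add_pow_le_exp_one {c : ℝ} {n : ℕ} (hc : 0 ≤ 1 + c) (hnc : n * c ≤ 1) :
    (1 + c) ^ n ≤ exp 1 :=
  calc (1 + c) ^ n ≤ exp c ^ n := pow_le_pow_left₀ hc (by linarith [add_one_le_exp c]) n
    _ = exp (n * c) := (exp_nat_mul c n).symm
    _ ≤ exp 1 := exp_le_exp.mpr hnc

section Iterates

variable {E F : Type*} [SeminormedAddCommGroup E] [SeminormedAddCommGroup F]

theorem norm_sub_initial_le_of_norm_step_le {x : ℕ → E} {f : E → F} {L η : ℝ} {N : ℕ}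
    (hL : 0 ≤ L) (hη : 0 ≤ η) (hf : ∀ y z, ‖f y - f z‖ ≤ L * ‖y - z‖)
    (hstep : ∀ n < N, ‖x (n + 1) - x n‖ ≤ η * ‖f (x n)‖) (hN : η * L * N ≤ 1) :
    ∀ n ≤ N, ‖x n - x 0‖ ≤ η * N * exp 1 * ‖f (x 0)‖ := by
  have hgrowth : ∀ n < N, ‖x (n + 1) - x 0‖ ≤ (1 + η * L) * ‖x n - x 0‖ + η * ‖f (x 0)‖ := by
    intro n hn
    have hfx : ‖f (x n)‖ ≤ ‖f (x 0)‖ + L * ‖x n - x 0‖ := by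
      linarith [norm_le_norm_add_norm_sub' (f (x n)) (f (x 0)), hf (x n) (x 0)]
    calc ‖x (n + 1) - x 0‖ ≤ ‖x (n + 1) - x n‖ + ‖x n - x 0‖ :=
          norm_sub_le_norm_sub_add_norm_sub ..
      _ ≤ η * (‖f (x 0)‖ + L * ‖x n - x 0‖) + ‖x n - x 0‖ := by
        grw [hstep n hn, hfx]
      _ = (1 + η * L) * ‖x n - x 0‖ + η * ‖f (x 0)‖ := by ring
  intro n hn
  have hgronwall := le_nat_mul_mul_one_add_pow (a := fun n ↦ ‖x n - x 0‖)
    (by positivity) (by positivity) (by simp) hgrowth n hn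
  have hn' : (n : ℝ) ≤ N := by exact_mod_cast hn
  have hexp : (1 + η * L) ^ n ≤ exp 1 :=
    one_add_pow_le_exp_one (by positivity) (by nlinarith [mul_nonneg hη hL])
  calc ‖x n - x 0‖ ≤ n * (η * ‖f (x 0)‖) * (1 + η * L) ^ n := hgronwall
    _ ≤ N * (η * ‖f (x 0)‖) * exp 1 := by gcongr
    _ = η * N * exp 1 * ‖f (x 0)‖ := by ring

end Iterates

section BlockIterates

variable {E : Type*} {S Q : ℕ} {v : ℕ → ℕ → E}

def flattenBlocks (Q : ℕ) (v : ℕ → ℕ → E) (n : ℕ) : E := v (n / Q) (n % Q)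

theorem flattenBlocks_mul_add {s q : ℕ} (hq : q < Q) : flattenBlocks Q v (s * Q + q) = v s q := by
  have hQ : 0 < Q := by omega
  simp only [flattenBlocks, Nat.mul_add_mod_self_right, Nat.mod_eq_of_lt hq]
  rw [mul_comm, Nat.mul_add_div hQ, Nat.div_eq_of_lt hq, add_zero]

theorem flattenBlocks_mul_add_of_le (hQ : 0 < Q) (hrecs : ∀ s < S, v (s + 1) 0 = v s Q)
    {s q : ℕ} (hs : s < S) (hq : q ≤ Q) : flattenBlocks Q v (s * Q + q) = v s q := by
  rcases hq.lt_or_eq with hq | hq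
  · exact flattenBlocks_mul_add hq
  · rw [hq, ← hrecs s hs, show s * Q + Q = (s + 1) * Q + 0 by ring, flattenBlocks_mul_add hQ]

theorem flattenBlocks_succ (hQ : 0 < Q) (hrecs : ∀ s < S, v (s + 1) 0 = v s Q)
    {P : E → E → Prop} (hP : ∀ s < S, ∀ q < Q, P (v s q) (v s (q + 1))) :
    ∀ n < S * Q, P (flattenBlocks Q v n) (flattenBlocks Q v (n + 1)) := by
  intro n hn
  have hs : n / Q < S := Nat.div_lt_of_lt_mul (by rwa [mul_comm])
  have hq : n % Q < Q := Nat.mod_lt n hQ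
  have hn : n = n / Q * Q + n % Q := (Nat.div_add_mod' n Q).symm
  rw [hn, add_assoc, flattenBlocks_mul_add hq,
    flattenBlocks_mul_add_of_le hQ hrecs hs (Nat.succ_le_of_lt hq)]
  exact hP _ hs _ hq

theorem sub_eq_sum_sum_sub_of_blocks [AddCommGroup E] (hrecs : ∀ s < S, v (s + 1) 0 = v s Q) :
    v S 0 - v 0 0 = ∑ s ∈ range S, ∑ q ∈ range Q, (v s (q + 1) - v s q) := by
  rw [← sum_range_sub (fun s ↦ v s 0)]
  refine sum_congr rfl fun s hs ↦ ?_
  rw [hrecs s (mem_range.mp hs), sum_range_sub (fun q ↦ v s q)]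

end BlockIterates

section BlockMask

variable {d : ℕ} {K : Type*} [DecidableEq K] (blk : Fin d → K) (k : K)

noncomputable def blockMask (w : EuclideanSpace ℝ (Fin d)) : EuclideanSpace ℝ (Fin d) :=
  WithLp.toLp 2 (fun i ↦ if blk i = k then w i else 0)

theorem maskedGrad_eq_blockMask (ψ : EuclideanSpace ℝ (Fin d) → ℝ) (x : EuclideanSpace ℝ (Fin d)) :
    maskedGrad blk ψ x k = blockMask blk k (gradient ψ x) := rfl

theorem inner_blockMask_right (w u : EuclideanSpace ℝ (Fin d)) :
    inner ℝ w (blockMask blk k u) = inner ℝ (blockMask blk k w) (blockMask blk k u) := by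
  simp only [PiLp.inner_apply, RCLike.inner_apply, starRingEnd_apply, star_trivial, blockMask]
  refine sum_congr rfl fun i _ ↦ ?_
  split_ifs <;> ring

theorem norm_blockMask_le (w : EuclideanSpace ℝ (Fin d)) : ‖blockMask blk k w‖ ≤ ‖w‖ := by
  rw [EuclideanSpace.norm_eq, EuclideanSpace.norm_eq]
  refine Real.sqrt_le_sqrt (sum_le_sum fun i _ ↦ ?_)
  simp only [blockMask, PiLp.toLp_apply]
  split_ifs <;> simp [sq_nonneg]

theorem blockMask_sub (w u : EuclideanSpace ℝ (Fin d)) :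
    blockMask blk k (w - u) = blockMask blk k w - blockMask blk k u := by
  ext i
  simp only [blockMask, PiLp.sub_apply, PiLp.toLp_apply]
  split_ifs <;> simp

theorem norm_blockMask_sq_sub_le_inner (g₀ g : EuclideanSpace ℝ (Fin d)) :
    ‖blockMask blk k g₀‖ ^ 2 - ‖g₀‖ * ‖g - g₀‖ ≤ inner ℝ g₀ (blockMask blk k g) := by
  set m₀ := blockMask blk k g₀
  have hsplit : inner ℝ g₀ (blockMask blk k g)
      = ‖m₀‖ ^ 2 + inner ℝ m₀ (blockMask blk k (g - g₀)) := by
    rw [inner_blockMask_right, blockMask_sub, inner_sub_right, real_inner_self_eq_norm_sq]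
    ring
  have herr : ‖m₀‖ * ‖blockMask blk k (g - g₀)‖ ≤ ‖g₀‖ * ‖g - g₀‖ := by
    gcongr <;> exact norm_blockMask_le ..
  rw [hsplit]
  linarith [neg_le_of_abs_le (abs_real_inner_le_norm m₀ (blockMask blk k (g - g₀)))]

end BlockMask

section MCCD

variable {d : ℕ} {K : Type*} [DecidableEq K] {blk : Fin d → K} {ψ : EuclideanSpace ℝ (Fin d) → ℝ}
  {L η : ℝ}

theorem inner_gradient_neg_smul_maskedGrad_le (hη : 0 ≤ η)
    (hsmooth : ∀ x y, ‖gradient ψ x - gradient ψ y‖ ≤ L * ‖x - y‖)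
    {x₀ x : EuclideanSpace ℝ (Fin d)} {C : ℝ} (hx : L * ‖x - x₀‖ ≤ C * ‖gradient ψ x₀‖) (k : K) :
    inner ℝ (gradient ψ x₀) (-(η • maskedGrad blk ψ x k))
      ≤ -η * ‖maskedGrad blk ψ x₀ k‖ ^ 2 + η * C * ‖gradient ψ x₀‖ ^ 2 := by
  have herr : ‖gradient ψ x₀‖ * ‖gradient ψ x - gradient ψ x₀‖ ≤ C * ‖gradient ψ x₀‖ ^ 2 :=
    calc _ ≤ ‖gradient ψ x₀‖ * (L * ‖x - x₀‖) := by grw [hsmooth]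
      _ ≤ ‖gradient ψ x₀‖ * (C * ‖gradient ψ x₀‖) := by grw [hx]
      _ = C * ‖gradient ψ x₀‖ ^ 2 := by ring
  rw [inner_neg_right, real_inner_smul_right, maskedGrad_eq_blockMask, maskedGrad_eq_blockMask]
  nlinarith [norm_blockMask_sq_sub_le_inner blk k (gradient ψ x₀) (gradient ψ x)]

theorem norm_mccd_iterate_sub_le {S Q : ℕ} {kseq : ℕ → K} {v : ℕ → ℕ → EuclideanSpace ℝ (Fin d)}
    (hL : 0 ≤ L) (hη : 0 ≤ η) (hQ : 0 < Q)
    (hsmooth : ∀ x y, ‖gradient ψ x - gradient ψ y‖ ≤ L * ‖x - y‖)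
    (hrecq : ∀ s < S, ∀ q < Q, v s (q + 1) = v s q - η • maskedGrad blk ψ (v s q) (kseq s))
    (hrecs : ∀ s < S, v (s + 1) 0 = v s Q) (hηLSQ : η * L * (S * Q : ℕ) ≤ 1) :
    ∀ s < S, ∀ q < Q, ‖v s q - v 0 0‖ ≤ η * (S * Q : ℕ) * exp 1 * ‖gradient ψ (v 0 0)‖ := by
  have hsteps := flattenBlocks_succ hQ hrecs (P := fun y z ↦ ‖z - y‖ ≤ η * ‖gradient ψ y‖)
    fun s hs q hq ↦ by
      rw [hrecq s hs q hq, sub_sub_cancel_left, norm_neg, norm_smul, Real.norm_of_nonneg hη]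
      exact mul_le_mul_of_nonneg_left (norm_blockMask_le ..) hη
  intro s hs q hq
  have hsq : s * Q + q ≤ S * Q := by nlinarith
  have := norm_sub_initial_le_of_norm_step_le hL hη hsmooth hsteps hηLSQ _ hsq
  rwa [flattenBlocks_mul_add hq, show flattenBlocks Q v 0 = v 0 0 by simp [flattenBlocks]] at this

end MCCD

theorem mccd_inner_product_bound_general
    {d : ℕ} {K : Type*} [DecidableEq K]
    (blk : Fin d → K)
    (ψ : EuclideanSpace ℝ (Fin d) → ℝ) (L : ℝ)
    (hsmooth : ∀ x y : EuclideanSpace ℝ (Fin d),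
      ‖gradient ψ x - gradient ψ y‖ ≤ L * ‖x - y‖)
    (S Q : ℕ)
    (η : ℝ) (hη : 0 < η) (hηub : η ≤ 1 / (L * S * Q))
    (kseq : ℕ → K)
    (v : ℕ → ℕ → EuclideanSpace ℝ (Fin d))
    (hrecq : ∀ s < S, ∀ q < Q,
      v s (q + 1) = v s q - η • maskedGrad blk ψ (v s q) (kseq s))
    (hrecs : ∀ s < S, v (s + 1) 0 = v s Q)
    (C₁ : ℝ) (hC₁ : C₁ = η * Real.exp 1 * L * S * Q) :
    inner ℝ (gradient ψ (v 0 0)) (v S 0 - v 0 0)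
      ≤ -η * ∑ s ∈ Finset.range S, ∑ q ∈ Finset.range Q,
            ‖maskedGrad blk ψ (v 0 0) (kseq s)‖ ^ 2
        + η * S * Q * C₁ * ‖gradient ψ (v 0 0)‖ ^ 2 := by
  have hLSQ : 0 < L * S * Q := one_div_pos.mp (hη.trans_le hηub)
  have hLS : 0 < L * S := pos_of_mul_pos_left hLSQ (by positivity)
  have hL : 0 < L := pos_of_mul_pos_left hLS (by positivity)
  have hQ : 0 < Q := by exact_mod_cast pos_of_mul_pos_right hLSQ hLS.le
  have hηLSQ : η * L * (S * Q : ℕ) ≤ 1 := by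
    rw [le_div_iff₀ hLSQ] at hηub
    push_cast
    linarith
  have hdist : ∀ s < S, ∀ q < Q, L * ‖v s q - v 0 0‖ ≤ C₁ * ‖gradient ψ (v 0 0)‖ := by
    intro s hs q hq
    calc _ ≤ L * (η * (S * Q : ℕ) * exp 1 * ‖gradient ψ (v 0 0)‖) := by
          grw [norm_mccd_iterate_sub_le hL.le hη.le hQ hsmooth hrecq hrecs hηLSQ s hs q hq]
      _ = C₁ * ‖gradient ψ (v 0 0)‖ := by rw [hC₁]; push_cast; ring
  rw [sub_eq_sum_sum_sub_of_blocks hrecs]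
  simp_rw [inner_sum]
  calc _ ≤ ∑ s ∈ range S, ∑ q ∈ range Q, (-η * ‖maskedGrad blk ψ (v 0 0) (kseq s)‖ ^ 2
          + η * C₁ * ‖gradient ψ (v 0 0)‖ ^ 2) := by
        refine sum_le_sum fun s hs ↦ sum_le_sum fun q hq ↦ ?_
        rw [hrecq s (mem_range.mp hs) q (mem_range.mp hq), sub_sub_cancel_left]
        exact inner_gradient_neg_smul_maskedGrad_le hη.le hsmooth
          (hdist s (mem_range.mp hs) q (mem_range.mp hq)) _
    _ = _ := by simp only [sum_add_distrib, sum_const, card_range, nsmul_eq_mul, mul_sum]; ring_nf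

/-- **Inner-product bound.** For Markov chain coordinate descent iterates of an `L`-smooth
differentiable `ψ` with step size `η ∈ (0, 1/(LSQ)]` and final iterate `v^{S,0}`,
`⟨∇ψ(v⁰⁰), v^{S,0} − v⁰⁰⟩ ≤ −η ∑_{s<S} ∑_{q<Q} ‖∇_{k^s}ψ(v⁰⁰)‖² + η S Q C₁ ‖∇ψ(v⁰⁰)‖²`,
where `C₁ = η e L S Q`. -/
theorem mccd_inner_product_bound
    {d : ℕ} (hd : 1 ≤ d) {K : Type*} [Fintype K] [DecidableEq K]
    (blk : Fin d → K)
    (ψ : EuclideanSpace ℝ (Fin d) → ℝ) (L : ℝ) (hL : 0 < L)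
    (hdiff : Differentiable ℝ ψ)
    (hsmooth : ∀ x y : EuclideanSpace ℝ (Fin d),
      ‖gradient ψ x - gradient ψ y‖ ≤ L * ‖x - y‖)
    (S Q : ℕ) (hS : 1 ≤ S) (hQ : 1 ≤ Q)
    (η : ℝ) (hη : 0 < η) (hηub : η ≤ 1 / (L * S * Q))
    (kseq : ℕ → K)
    (v : ℕ → ℕ → EuclideanSpace ℝ (Fin d))
    (hrecq : ∀ s < S, ∀ q < Q,
      v s (q + 1) = v s q - η • maskedGrad blk ψ (v s q) (kseq s))
    (hrecs : ∀ s < S, v (s + 1) 0 = v s Q)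
    (C₁ : ℝ) (hC₁ : C₁ = η * Real.exp 1 * L * S * Q) :
    inner ℝ (gradient ψ (v 0 0)) (v S 0 - v 0 0)
      ≤ -η * ∑ s ∈ Finset.range S, ∑ q ∈ Finset.range Q,
            ‖maskedGrad blk ψ (v 0 0) (kseq s)‖ ^ 2
        + η * S * Q * C₁ * ‖gradient ψ (v 0 0)‖ ^ 2 :=
  mccd_inner_product_bound_general blk ψ L hsmooth S Q η hη hηub kseq v hrecq hrecs C₁ hC₁
end
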